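/- Let A = T_n⟨S; T⟩ be a walk-ensured Toeplitz matrix, and let S*, T* ⊆ {1,…,n−1} with S ⊆ S*, T ⊆ T*. If gcd{s+t : s∈S, t∈T} = gcd{s+t : s∈S*, t∈T*}, then there exists M such that A^m = B^m for all m ≥ M, where B = T_n⟨S*; T*⟩; in particular A and B have the same matrix period, which equals gcd(S+T)/gcd(S∪T). -/

import Mathlib

/-- gcd of all sums `s + t` with `s ∈ S`, `t ∈ T`. -/
def sumGcd (S T : Finset ℕ) : ℕ := (S ×ˢ T).gcd (fun p => p.1 + p.2)

/-- gcd of all elements of `S ∪ T`. -/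
def unionGcd (S T : Finset ℕ) : ℕ := (S ∪ T).gcd id

/-- Arc of the Toeplitz digraph `D(T_n⟨S;T⟩)` on vertex set `{1,…,n}`. -/
def arc (n : ℕ) (S T : Finset ℕ) (u v : ℕ) : Prop :=
  u ∈ Finset.Icc 1 n ∧ v ∈ Finset.Icc 1 n ∧
    ((∃ s ∈ S, (v : ℤ) - u = s) ∨ (∃ t ∈ T, (u : ℤ) - v = t))

/-- There is a directed walk of length `m` from `u` to `v` in `D(T_n⟨S;T⟩)`. -/
def hasWalk (n : ℕ) (S T : Finset ℕ) (u v m : ℕ) : Prop :=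
  ∃ f : ℕ → ℕ, f 0 = u ∧ f m = v ∧ ∀ i < m, arc n S T (f i) (f (i + 1))

/-- `ℓ ∈ P_i(A)` for `A = T_n⟨S;T⟩`, where `dplus = gcd(S+T)` and `s1 = min S`. -/
def Pset (n dplus s1 : ℕ) (i : ℕ) (ℓ : ℤ) : Prop :=
  -(n : ℤ) < ℓ ∧ ℓ < n ∧ ℓ ≡ (i : ℤ) * s1 [ZMOD (dplus : ℤ)]

/-- `ℓ ∈ Q_i(A)` for `A = T_n⟨S;T⟩`. -/
def Qset (n : ℕ) (S T : Finset ℕ) (i : ℕ) (ℓ : ℤ) : Prop :=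
  -(n : ℤ) < ℓ ∧ ℓ < n ∧ ∃ a b : ℕ → ℕ,
    ((∑ s ∈ S, (a s : ℤ) * s) - ∑ t ∈ T, (b t : ℤ) * t) = ℓ ∧
    ((∑ s ∈ S, a s) + ∑ t ∈ T, b t) = i

/-- `ℓ ∈ R_i(A)` for `A = T_n⟨S;T⟩`. -/
def Rset (n : ℕ) (S T : Finset ℕ) (i : ℕ) (ℓ : ℤ) : Prop :=
  -(n : ℤ) < ℓ ∧ ℓ < n ∧ ∀ u ∈ Finset.Icc 1 n, ∀ v ∈ Finset.Icc 1 n,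
    (v : ℤ) - u = ℓ → hasWalk n S T u v i

/-- `T_n⟨S;T⟩` is walk-ensured (with `s1 = min S`). -/
def walkEnsured (n : ℕ) (S T : Finset ℕ) (s1 : ℕ) : Prop :=
  ∃ M : ℕ, 0 < M ∧ ∀ u ∈ Finset.Icc 1 n, ∀ v ∈ Finset.Icc 1 n, ∀ ℓ : ℕ, M ≤ ℓ →
    ((v : ℤ) - u ≡ (ℓ : ℤ) * s1 [ZMOD ((sumGcd S T : ℕ) : ℤ)]) → hasWalk n S T u v ℓ

/-!
Every arc of `D(B)` moves by `s` or `-t` with `s ∈ S*`, `t ∈ T*`, and all of these are congruent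
to `s₁ = min S` modulo `d = gcd(S* + T*) = gcd(S + T)`; so a walk of length `m` from `u` to `v`
forces `v - u ≡ m s₁ (mod d)`. Walk-ensuredness of `A`, together with `A ≤ B`, gives the converse
for long walks, so for large `m` both `A^m` and `B^m` are the matrix of the relation
`v - u ≡ m s₁ (mod d)`. Since `d < 2n`, every residue mod `d` occurs as a difference `v - u`, so
`p` is an eventual period iff `d ∣ p s₁`, i.e. iff `d / gcd(d, s₁) ∣ p`; and
`gcd(d, s₁) = gcd(S ∪ T)`.
-/

lemma sumGcd_dvd_add {S T : Finset ℕ} {s t : ℕ} (hs : s ∈ S) (ht : t ∈ T) :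
    sumGcd S T ∣ s + t :=
  Finset.gcd_dvd (s := S ×ˢ T) (f := fun p : ℕ × ℕ => p.1 + p.2) (b := (s, t))
    (Finset.mem_product.mpr ⟨hs, ht⟩)

lemma gcd_sumGcd_eq_unionGcd {S T : Finset ℕ} {s₀ : ℕ} (hs₀ : s₀ ∈ S) (hT : T.Nonempty) :
    Nat.gcd (sumGcd S T) s₀ = unionGcd S T := by
  set e := Nat.gcd (sumGcd S T) s₀
  have he_add : ∀ {s t}, s ∈ S → t ∈ T → e ∣ s + t := fun hs ht =>
    (Nat.gcd_dvd_left _ _).trans (sumGcd_dvd_add hs ht)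
  have he_T : ∀ t ∈ T, e ∣ t := fun t ht =>
    (Nat.dvd_add_right (Nat.gcd_dvd_right _ _)).mp (he_add hs₀ ht)
  obtain ⟨t₀, ht₀⟩ := hT
  apply Nat.dvd_antisymm
  · refine Finset.dvd_gcd fun x hx => ?_
    rcases Finset.mem_union.mp hx with hxS | hxT
    · exact (Nat.dvd_add_left (he_T t₀ ht₀)).mp (he_add hxS ht₀)
    · exact he_T x hxT
  · refine Nat.dvd_gcd (Finset.dvd_gcd fun p hp => ?_)
      (Finset.gcd_dvd (Finset.mem_union_left _ hs₀))
    obtain ⟨hp₁, hp₂⟩ := Finset.mem_product.mp hp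
    exact dvd_add (Finset.gcd_dvd (Finset.mem_union_left _ hp₁))
      (Finset.gcd_dvd (Finset.mem_union_right _ hp₂))

lemma Nat.dvd_mul_iff_div_gcd_dvd {d c : ℕ} (hd : d ≠ 0) (q : ℕ) :
    d ∣ q * c ↔ d / d.gcd c ∣ q := by
  rw [← ZMod.addOrderOf_coe c hd, addOrderOf_dvd_iff_nsmul_eq_zero, nsmul_eq_mul,
    ← Nat.cast_mul, ZMod.natCast_eq_zero_iff]

lemma exists_mem_Icc_sub_eq {n : ℕ} {ℓ : ℤ} (h₁ : -(n : ℤ) < ℓ) (h₂ : ℓ < n) :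
    ∃ u ∈ Finset.Icc 1 n, ∃ v ∈ Finset.Icc 1 n, (v : ℤ) - u = ℓ := by
  refine ⟨(1 - min ℓ 0).toNat, Finset.mem_Icc.mpr ⟨?_, ?_⟩,
    (1 + max ℓ 0).toNat, Finset.mem_Icc.mpr ⟨?_, ?_⟩, ?_⟩ <;> omega

lemma exists_mem_Icc_sub_modEq {n d : ℕ} (hd : 0 < d) (hdn : d < 2 * n) (r : ℤ) :
    ∃ u ∈ Finset.Icc 1 n, ∃ v ∈ Finset.Icc 1 n, (v : ℤ) - u ≡ r [ZMOD d] := by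
  have hr : r % d ≡ r [ZMOD d] := Int.emod_emod_of_dvd r dvd_rfl
  have h₀ : 0 ≤ r % d := Int.emod_nonneg r (by omega)
  have h₁ : r % d < d := Int.emod_lt_of_pos r (by omega)
  by_cases hrn : r % d < n
  · obtain ⟨u, hu, v, hv, huv⟩ := exists_mem_Icc_sub_eq (n := n) (by omega) hrn
    exact ⟨u, hu, v, hv, huv ▸ hr⟩
  · obtain ⟨u, hu, v, hv, huv⟩ :=
      exists_mem_Icc_sub_eq (n := n) (ℓ := r % d - d) (by omega) (by omega)
    refine ⟨u, hu, v, hv, huv ▸ Int.ModEq.trans ?_ hr⟩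
    exact Int.modEq_iff_dvd.mpr ⟨1, by ring⟩

lemma Int.mul_modEq_add_mul_iff_dvd {d : ℕ} (m p c : ℕ) :
    (m : ℤ) * c ≡ ((m + p : ℕ) : ℤ) * c [ZMOD d] ↔ d ∣ p * c := by
  rw [Int.modEq_iff_dvd, ← Int.natCast_dvd_natCast]
  push_cast
  ring_nf

lemma isLeast_eventual_period {W : ℕ → ℕ → ℕ → Prop} {n d c M : ℕ} (hd : 0 < d)
    (hdn : d < 2 * n)
    (hW : ∀ m, M ≤ m → ∀ u v, W u v m ↔
      u ∈ Finset.Icc 1 n ∧ v ∈ Finset.Icc 1 n ∧ (v : ℤ) - u ≡ m * c [ZMOD d]) :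
    IsLeast
      {p : ℕ | 0 < p ∧ ∃ M : ℕ, ∀ m : ℕ, M ≤ m → ∀ u v : ℕ, (W u v m ↔ W u v (m + p))}
      (d / d.gcd c) := by
  have hperiod : ∀ p, (∃ M' : ℕ, ∀ m : ℕ, M' ≤ m → ∀ u v : ℕ, (W u v m ↔ W u v (m + p))) ↔
      d ∣ p * c := by
    intro p
    constructor
    · rintro ⟨M', hM'⟩
      set m := max M M'
      obtain ⟨u, hu, v, hv, huv⟩ := exists_mem_Icc_sub_modEq hd hdn (m * c)
      have hWm : W u v m := (hW m (le_max_left _ _) u v).mpr ⟨hu, hv, huv⟩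
      have hWmp : W u v (m + p) := (hM' m (le_max_right _ _) u v).mp hWm
      have huv' := ((hW (m + p) (by omega) u v).mp hWmp).2.2
      exact (Int.mul_modEq_add_mul_iff_dvd m p c).mp (huv.symm.trans huv')
    · intro hp
      have hshift m := (Int.mul_modEq_add_mul_iff_dvd m p c).mpr hp
      refine ⟨M, fun m hm u v => ?_⟩
      rw [hW m hm, hW (m + p) (by omega)]
      exact and_congr_right' <| and_congr_right'
        ⟨(·.trans (hshift m)), (·.trans (hshift m).symm)⟩
  have hpos : 0 < d / d.gcd c :=
    Nat.div_pos (Nat.le_of_dvd hd (Nat.gcd_dvd_left d c)) (Nat.gcd_pos_of_pos_left c hd)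
  refine ⟨⟨hpos, (hperiod _).mpr ((Nat.dvd_mul_iff_div_gcd_dvd hd.ne' _).mpr dvd_rfl)⟩, ?_⟩
  rintro p ⟨hp, hper⟩
  exact Nat.le_of_dvd hp ((Nat.dvd_mul_iff_div_gcd_dvd hd.ne' p).mp ((hperiod p).mp hper))

section Walks

variable {n : ℕ} {S T S' T' : Finset ℕ}

lemma arc.mono (hS : S ⊆ S') (hT : T ⊆ T') {u v : ℕ} (h : arc n S T u v) :
    arc n S' T' u v :=
  ⟨h.1, h.2.1,
    h.2.2.imp (fun ⟨s, hs, he⟩ => ⟨s, hS hs, he⟩) (fun ⟨t, ht, he⟩ => ⟨t, hT ht, he⟩)⟩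

lemma arc_sub_modEq {d s₀ : ℕ} (hdvd : ∀ s ∈ S, ∀ t ∈ T, d ∣ s + t) (hs₀ : s₀ ∈ S)
    (hT : T.Nonempty) {u v : ℕ} (h : arc n S T u v) : (v : ℤ) - u ≡ s₀ [ZMOD d] := by
  have hdvd' : ∀ s ∈ S, ∀ t ∈ T, (d : ℤ) ∣ s + t := fun s hs t ht => by
    exact_mod_cast hdvd s hs t ht
  obtain ⟨t₀, ht₀⟩ := hT
  rcases h.2.2 with ⟨s, hs, he⟩ | ⟨t, ht, he⟩
  · refine he ▸ Int.modEq_iff_dvd.mpr ?_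
    simpa using dvd_sub (hdvd' s₀ hs₀ t₀ ht₀) (hdvd' s hs t₀ ht₀)
  · rw [show (v : ℤ) - u = -t by omega]
    exact Int.modEq_iff_dvd.mpr (by simpa using hdvd' s₀ hs₀ t ht)

lemma hasWalk.mono (hS : S ⊆ S') (hT : T ⊆ T') {u v m : ℕ} (h : hasWalk n S T u v m) :
    hasWalk n S' T' u v m :=
  let ⟨f, h₀, hm, harc⟩ := h
  ⟨f, h₀, hm, fun i hi => (harc i hi).mono hS hT⟩

lemma hasWalk.mem_Icc {u v m : ℕ} (h : hasWalk n S T u v m) (hm : 0 < m) :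
    u ∈ Finset.Icc 1 n ∧ v ∈ Finset.Icc 1 n := by
  obtain ⟨f, rfl, rfl, harc⟩ := h
  obtain ⟨k, rfl⟩ := Nat.exists_eq_succ_of_ne_zero hm.ne'
  exact ⟨(harc 0 hm).1, (harc k (by omega)).2.1⟩

lemma hasWalk.sub_modEq {d c : ℕ} (harc : ∀ u v, arc n S T u v → (v : ℤ) - u ≡ c [ZMOD d])
    {u v m : ℕ} (h : hasWalk n S T u v m) : (v : ℤ) - u ≡ m * c [ZMOD d] := by
  induction m generalizing v with
  | zero =>
    obtain ⟨f, rfl, rfl, -⟩ := h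
    simp [Int.ModEq.refl]
  | succ m ih =>
    obtain ⟨f, rfl, rfl, hf⟩ := h
    have hprefix := ih ⟨f, rfl, rfl, fun i hi => hf i (by omega)⟩
    have hlast := harc _ _ (hf m (by omega))
    calc (f (m + 1) : ℤ) - f 0 = (f m - f 0) + (f (m + 1) - f m) := by ring
      _ ≡ m * c + c [ZMOD d] := hprefix.add hlast
      _ = ((m + 1 : ℕ) : ℤ) * c := by push_cast; ring

lemma hasWalk_iff_modEq {d c M : ℕ} (hS : S ⊆ S') (hT : T ⊆ T')
    (harc : ∀ u v, arc n S' T' u v → (v : ℤ) - u ≡ c [ZMOD d]) (hM : 0 < M)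
    (hwalk : ∀ u ∈ Finset.Icc 1 n, ∀ v ∈ Finset.Icc 1 n, ∀ ℓ : ℕ, M ≤ ℓ →
      (v : ℤ) - u ≡ ℓ * c [ZMOD d] → hasWalk n S T u v ℓ)
    (m : ℕ) (hm : M ≤ m) (u v : ℕ) :
    hasWalk n S' T' u v m ↔
      u ∈ Finset.Icc 1 n ∧ v ∈ Finset.Icc 1 n ∧ (v : ℤ) - u ≡ m * c [ZMOD d] := by
  refine ⟨fun h => ?_, fun ⟨hu, hv, huv⟩ => (hwalk u hu v hv m hm huv).mono hS hT⟩
  obtain ⟨hu, hv⟩ := h.mem_Icc (by omega)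
  exact ⟨hu, hv, h.sub_modEq harc⟩

end Walks

theorem stmt16 (n : ℕ) (S T Sstar Tstar : Finset ℕ)
    (hS : S.Nonempty) (hT : T.Nonempty)
    (hSsub : S ⊆ Sstar) (hTsub : T ⊆ Tstar)
    (hSstar : Sstar ⊆ Finset.Icc 1 (n - 1)) (hTstar : Tstar ⊆ Finset.Icc 1 (n - 1))
    (hwe : walkEnsured n S T (S.min' hS))
    (hgcd : sumGcd S T = sumGcd Sstar Tstar) :
    (∃ M : ℕ, ∀ m : ℕ, M ≤ m → ∀ u v : ℕ,
        (hasWalk n S T u v m ↔ hasWalk n Sstar Tstar u v m)) ∧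
    IsLeast {p : ℕ | 0 < p ∧ ∃ M : ℕ, ∀ m : ℕ, M ≤ m → ∀ u v : ℕ,
        (hasWalk n Sstar Tstar u v m ↔ hasWalk n Sstar Tstar u v (m + p))}
      (sumGcd S T / unionGcd S T) := by
  obtain ⟨M, hM, hwalk⟩ := hwe
  set s₁ := S.min' hS
  have hs₁ : s₁ ∈ S := S.min'_mem hS
  obtain ⟨t₁, ht₁⟩ := hT
  have hs₁n := Finset.mem_Icc.mp (hSstar (hSsub hs₁))
  have ht₁n := Finset.mem_Icc.mp (hTstar (hTsub ht₁))
  have hd_dvd : sumGcd S T ∣ s₁ + t₁ := sumGcd_dvd_add hs₁ ht₁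
  have hd : 0 < sumGcd S T := Nat.pos_of_dvd_of_pos hd_dvd (by omega)
  have hdn : sumGcd S T < 2 * n := (Nat.le_of_dvd (by omega) hd_dvd).trans_lt (by omega)
  have harc : ∀ u v, arc n Sstar Tstar u v → (v : ℤ) - u ≡ s₁ [ZMOD sumGcd S T] :=
    fun u v h => hgcd ▸ arc_sub_modEq (fun s hs t ht => sumGcd_dvd_add hs ht) (hSsub hs₁)
      ⟨t₁, hTsub ht₁⟩ h
  have hB := hasWalk_iff_modEq hSsub hTsub harc hM hwalk
  have hA := hasWalk_iff_modEq subset_rfl subset_rfl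
    (fun u v h => harc u v (h.mono hSsub hTsub)) hM hwalk
  refine ⟨⟨M, fun m hm u v => by rw [hA m hm, hB m hm]⟩, ?_⟩
  rw [← gcd_sumGcd_eq_unionGcd hs₁ ⟨t₁, ht₁⟩]
  exact isLeast_eventual_period hd hdn hB
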